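/- arXiv:1404.7739 — 2 statements merged into one kernel-verified Lean document; each statement's English description precedes it below -/
import Mathlib

section
/- Let n be prime and gamma a primitive element of F_{q^n}. Setting alpha_0 = gamma and alpha_1 = gamma^q, the elements alpha_1^{(q^k-1)/(q-1)} and alpha_0^{(q^k-q)/(q-1)} do not lie in the same coset of F_q^* in F_{q^n}^*, i.e., their quotient is not in F_q. -/
/-!
Since `q · (q^k - 1)/(q - 1) = (q^k - q)/(q - 1) + q^k`, the quotient `α₁^((q^k-1)/(q-1)) / α₀^((q^k-q)/(q-1))`
is just `γ^(q^k)`. It lies in `𝔽_q` iff it is fixed by Frobenius, i.e. iff `γ^(q^k (q-1)) = 1`, i.e. iff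
`q^n - 1 ∣ q^k (q - 1)`. But `q^n - 1` is coprime to `q`, so it would divide `q - 1`, which is
impossible for `n ≥ 2`.
-/

theorem Nat.sub_one_dvd_pow_sub_self (q : ℕ) {k : ℕ} (hk : k ≠ 0) : q - 1 ∣ q ^ k - q := by
  obtain ⟨j, rfl⟩ := Nat.exists_eq_succ_of_ne_zero hk
  rw [pow_succ', ← Nat.mul_sub_one]
  have hdvd : q - 1 ∣ q ^ j - 1 := by simpa only [one_pow] using Nat.sub_dvd_pow_sub_pow q 1 j
  exact hdvd.mul_left q

theorem Nat.mul_pow_sub_one_div_sub_one {q k : ℕ} (hq : 1 < q) (hk : k ≠ 0) :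
    q * ((q ^ k - 1) / (q - 1)) = (q ^ k - q) / (q - 1) + q ^ k := by
  have hA : (q - 1) * ((q ^ k - 1) / (q - 1)) = q ^ k - 1 :=
    Nat.mul_div_cancel' (by simpa only [one_pow] using Nat.sub_dvd_pow_sub_pow q 1 k)
  have hB : (q - 1) * ((q ^ k - q) / (q - 1)) = q ^ k - q :=
    Nat.mul_div_cancel' (Nat.sub_one_dvd_pow_sub_self q hk)
  generalize (q ^ k - 1) / (q - 1) = A at *
  generalize (q ^ k - q) / (q - 1) = B at *
  have hqk : q ≤ q ^ k := Nat.le_self_pow hk q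
  apply Nat.eq_of_mul_eq_mul_left (show 0 < q - 1 by omega)
  zify [hq.le, hqk, hq.le.trans hqk] at hA hB ⊢
  linear_combination (q : ℤ) * hA - hB

theorem Nat.not_pow_sub_one_dvd_pow_mul_sub_one {q n : ℕ} (hq : 1 < q) (hn : 2 ≤ n) (k : ℕ) :
    ¬ q ^ n - 1 ∣ q ^ k * (q - 1) := by
  have hqn : q < q ^ n := calc
    q < q ^ 2 := by nlinarith
    _ ≤ q ^ n := Nat.pow_le_pow_right (by omega) hn
  have hcop : (q ^ n - 1).Coprime q := by
    have : (q ^ n - 1).Coprime (q ^ n) :=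
      (Nat.coprime_self_sub_left (Nat.one_le_pow _ _ (by omega))).mpr (Nat.coprime_one_left _)
    exact this.coprime_dvd_right (dvd_pow_self q (by omega))
  intro h
  have := Nat.le_of_dvd (by omega) ((hcop.pow_right k).dvd_of_dvd_mul_left h)
  omega

section GroupWithZero

variable {G₀ : Type*} [GroupWithZero G₀] {g : G₀}

theorem pow_pow_div_pow_of_mul_eq_add (hg : g ≠ 0) {a b c d : ℕ} (h : a * b = c + d) :
    (g ^ a) ^ b / g ^ c = g ^ d := by
  rw [← pow_mul, h, pow_add, pow_mul_comm, mul_div_cancel_right₀ _ (pow_ne_zero _ hg)]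

theorem orderOf_dvd_mul_sub_one_of_pow_pow_eq (hg : g ≠ 0) {m q : ℕ} (hq : 0 < q)
    (h : (g ^ m) ^ q = g ^ m) : orderOf g ∣ m * (q - 1) := by
  apply orderOf_dvd_of_pow_eq_one
  rw [Nat.mul_sub_one, pow_sub₀ g hg (Nat.le_mul_of_pos_right m hq), pow_mul, h,
    mul_inv_cancel₀ (pow_ne_zero _ hg)]

end GroupWithZero

theorem stmt12_general (q n k : ℕ) (hq : 1 < q) (hn : n.Prime) (hk : 2 ≤ k)
    (F : Type*) [Field F]
    (γ : F) (hγ : orderOf γ = q ^ n - 1) :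
    ((γ ^ q) ^ ((q ^ k - 1) / (q - 1)) / γ ^ ((q ^ k - q) / (q - 1))) ^ q ≠
      (γ ^ q) ^ ((q ^ k - 1) / (q - 1)) / γ ^ ((q ^ k - q) / (q - 1)) := by
  have hqn : q ≤ q ^ n := Nat.le_self_pow hn.ne_zero q
  have hγ0 : γ ≠ 0 := by
    rintro rfl
    rw [orderOf_zero] at hγ
    omega
  rw [pow_pow_div_pow_of_mul_eq_add hγ0 (Nat.mul_pow_sub_one_div_sub_one hq (by omega))]
  intro h
  exact Nat.not_pow_sub_one_dvd_pow_mul_sub_one hq hn.two_le k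
    (hγ ▸ orderOf_dvd_mul_sub_one_of_pow_pow_eq hγ0 (by omega) h)

theorem stmt12 (q n k : ℕ) (hq : 1 < q) (hn : n.Prime) (hk : 2 ≤ k)
    (F : Type*) [Field F] [Fintype F] (hF : Fintype.card F = q ^ n)
    (γ : F) (hγ : orderOf γ = q ^ n - 1) :
    ((γ ^ q) ^ ((q ^ k - 1) / (q - 1)) / γ ^ ((q ^ k - q) / (q - 1))) ^ q ≠
      (γ ^ q) ^ ((q ^ k - 1) / (q - 1)) / γ ^ ((q ^ k - q) / (q - 1)) :=
  stmt12_general q n k hq hn hk F γ hγ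
end

section
/- Let d divide gcd(n,k) and let V be a k-dimensional F_q-subspace of F_{q^n}. Then V is an F_{q^d}-subspace of F_{q^n} if and only if its subspace polynomial has the form P_V(x) = sum_{i=0}^{k/d} c_i x^{q^{d i}} for some c_i in F_{q^n}. -/
open Polynomial

noncomputable def subspacePoly {F : Type*} [Field F] [Fintype F] (V : Set F) : F[X] :=
  ∏ v ∈ V.toFinite.toFinset, (X - C v)

/-!
Over `K = 𝔽_{q^d}`, which sits inside `F` because `d ∣ n`, a `K`-subspace `W` has a `q^d`-linearized
subspace polynomial, by induction on a spanning set: for `u ∉ W` the space `K u ⊕ W` is the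
disjoint union of the cosets `a u + W`, so, as `P_W` is additive and `K`-linear,
`P_{Ku ⊕ W}(X) = ∏_{a ∈ K} P_W(X - a u) = ∏_{a ∈ K} (P_W(X) - a P_W(u))
  = P_W(X)^{q^d} - P_W(u)^{q^d - 1} P_W(X)`,
which is again `q^d`-linearized, of one higher `q^d`-degree. Conversely, a `q^d`-linearized `P_V`
satisfies `P_V(c x) = c P_V(x)` whenever `c^{q^d} = c`, so its zero set `V` is closed under
multiplication by such `c`.
-/

open Finset

section Linearized

variable {R : Type*} [CommRing R] {r m : ℕ} {f g : R[X]}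

def IsLinearized (r m : ℕ) (f : R[X]) : Prop :=
  ∃ c : ℕ → R, f = ∑ i ∈ range (m + 1), C (c i) * X ^ r ^ i

theorem isLinearized_X : IsLinearized r 0 (X : R[X]) :=
  ⟨fun _ ↦ 1, by simp⟩

theorem IsLinearized.mono (hf : IsLinearized r m f) {m' : ℕ} (h : m ≤ m') :
    IsLinearized r m' f := by
  obtain ⟨c, rfl⟩ := hf
  refine ⟨fun i ↦ if i ≤ m then c i else 0, ?_⟩
  refine (sum_congr rfl fun i hi ↦ ?_).trans
    (sum_subset (range_subset_range.2 (by omega)) fun i _ hi ↦ ?_)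
  · simp [Nat.lt_succ_iff.mp (mem_range.mp hi)]
  · simp [show ¬i ≤ m by simpa [Nat.lt_succ_iff] using hi]

theorem IsLinearized.C_mul (hf : IsLinearized r m f) (a : R) : IsLinearized r m (C a * f) := by
  obtain ⟨c, rfl⟩ := hf
  exact ⟨fun i ↦ a * c i, by simp [mul_sum, mul_assoc]⟩

theorem IsLinearized.sub (hf : IsLinearized r m f) (hg : IsLinearized r m g) :
    IsLinearized r m (f - g) := by
  obtain ⟨c, rfl⟩ := hf
  obtain ⟨c', rfl⟩ := hg
  exact ⟨fun i ↦ c i - c' i, by simp [sub_mul, sum_sub_distrib]⟩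

theorem IsLinearized.eval_mul (hf : IsLinearized r m f) {γ : R} (hγ : γ ^ r = γ) (x : R) :
    f.eval (γ * x) = γ * f.eval x := by
  obtain ⟨c, rfl⟩ := hf
  have hγi (i : ℕ) : γ ^ r ^ i = γ := by
    rw [← congrFun (pow_iterate r i) γ]
    exact Function.IsFixedPt.iterate hγ i
  simp only [eval_finsetSum, Polynomial.eval_mul, eval_C, eval_pow, eval_X, mul_pow, hγi, mul_sum]
  exact sum_congr rfl fun i _ ↦ by ring

end Linearized

section FiniteFieldAlgebra

variable (K : Type*) [Field K] [Fintype K] {R : Type*} [CommRing R] [Algebra K R]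

local notation "q" => Fintype.card K

theorem sub_pow_card_pow (x y : R) (i : ℕ) : (x - y) ^ q ^ i = x ^ q ^ i - y ^ q ^ i := by
  simpa [AlgHom.coe_pow, FiniteField.coe_frobeniusAlgHom, pow_iterate]
    using map_sub (FiniteField.frobeniusAlgHom K R ^ i) x y

theorem FiniteField.prod_X_sub_C : ∏ a : K, (X - C a) = (X ^ q - X : K[X]) := by
  have hmonic : (X ^ q - X : K[X]).Monic :=
    monic_X_pow_sub (degree_X_le.trans_lt (by exact_mod_cast Fintype.one_lt_card))
  have hroots := FiniteField.roots_X_pow_card_sub_X K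
  rw [← prod_multiset_X_sub_C_of_monic_of_roots_card_eq hmonic
    (by rw [hroots, FiniteField.X_pow_card_sub_X_natDegree_eq K Fintype.one_lt_card]; rfl), hroots]
  rfl

theorem prod_sub_smul_eq (y : R) {b : R} (hb : IsUnit b) :
    ∏ a : K, (y - a • b) = y ^ q - b ^ (q - 1) * y := by
  obtain ⟨u, rfl⟩ := hb
  -- evaluate `∏ a, (X - a) = X ^ q - X` at `u⁻¹ y` and scale by `u ^ q`
  have key := congrArg (aeval (↑u⁻¹ * y)) (FiniteField.prod_X_sub_C K)
  simp only [map_prod, map_sub, aeval_X, aeval_C, map_pow] at key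
  obtain ⟨n, hn⟩ : ∃ n, q = n + 1 := ⟨q - 1, by have := Fintype.card_pos (α := K); omega⟩
  calc ∏ a : K, (y - a • (u : R))
      = ∏ a : K, ((u : R) * (↑u⁻¹ * y - algebraMap K R a)) := by
        refine prod_congr rfl fun a _ ↦ ?_
        rw [Algebra.smul_def, mul_sub, Units.mul_inv_cancel_left, mul_comm]
    _ = (u : R) ^ q * ((↑u⁻¹ * y) ^ q - ↑u⁻¹ * y) := by
        rw [prod_mul_distrib, prod_const, card_univ, key]
    _ = y ^ q - (u : R) ^ (q - 1) * y := by
        rw [hn, Nat.add_sub_cancel, mul_sub, mul_pow, ← mul_assoc, ← mul_pow, Units.mul_inv,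
          one_pow, one_mul, pow_succ (u : R), mul_assoc, Units.mul_inv_cancel_left]

variable {K} {f : R[X]} {m : ℕ}

theorem IsLinearized.pow_card (hf : IsLinearized q m f) : IsLinearized q (m + 1) (f ^ q) := by
  obtain ⟨c, rfl⟩ := hf
  refine ⟨fun i ↦ if i = 0 then 0 else c (i - 1) ^ q, ?_⟩
  conv_rhs => rw [sum_range_succ']
  simp only [Nat.add_one_ne_zero, if_false, if_true, Nat.add_sub_cancel, C_0, zero_mul, add_zero]
  -- `g ↦ g ^ q` is the Frobenius endomorphism of the `K`-algebra `R[X]`, hence additive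
  change FiniteField.frobeniusAlgHom K R[X] _ = _
  rw [map_sum]
  refine sum_congr rfl fun i _ ↦ ?_
  change (C (c i) * X ^ q ^ i) ^ q = _
  rw [mul_pow, ← C_pow, ← pow_mul, ← pow_succ]

theorem IsLinearized.comp_X_sub_C (hf : IsLinearized q m f) (a : R) :
    f.comp (X - C a) = f - C (f.eval a) := by
  obtain ⟨c, rfl⟩ := hf
  simp only [Polynomial.sum_comp, mul_comp, C_comp, pow_comp, X_comp, sub_pow_card_pow K, mul_sub,
    sum_sub_distrib, eval_finsetSum, Polynomial.eval_mul, eval_C, eval_pow, eval_X, map_sum,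
    map_mul, map_pow]

theorem IsLinearized.eval_smul (hf : IsLinearized q m f) (a : K) (x : R) :
    f.eval (a • x) = a • f.eval x := by
  simp only [Algebra.smul_def]
  exact hf.eval_mul (by rw [← map_pow, FiniteField.pow_card]) x

end FiniteFieldAlgebra

section SpanSingletonSup

variable {K F : Type*} [Field K] [Field F] [Algebra K F] {W : Submodule K F} {u : F}

noncomputable def Submodule.prodEquivSpanSingletonSup (hu : u ∉ W) : K × W ≃ ↥(K ∙ u ⊔ W) :=
  Equiv.ofBijective
    (fun z ↦ ⟨z.1 • u + z.2, add_mem_sup (smul_mem _ _ (mem_span_singleton_self u)) z.2.2⟩) <| by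
    refine ⟨fun ⟨a, w⟩ ⟨a', w'⟩ h ↦ ?_, fun ⟨v, hv⟩ ↦ ?_⟩
    · have h' : (a - a') • u = (w' : F) - w := by
        rw [sub_smul]; linear_combination (Subtype.ext_iff.mp h)
      obtain rfl : a = a' := by
        by_contra hne
        exact hu ((W.smul_mem_iff (sub_ne_zero.mpr hne)).mp (h' ▸ W.sub_mem w'.2 w.2))
      simp_all
    · obtain ⟨y, hy, w, hw, rfl⟩ := mem_sup.mp hv
      obtain ⟨a, rfl⟩ := mem_span_singleton.mp hy
      exact ⟨(a, ⟨w, hw⟩), rfl⟩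

theorem Submodule.natCard_spanSingleton_sup [Fintype K] (hu : u ∉ W) :
    Nat.card ↥(K ∙ u ⊔ W) = Fintype.card K * Nat.card W := by
  rw [← Nat.card_congr (prodEquivSpanSingletonSup hu), Nat.card_prod, Nat.card_eq_fintype_card]

end SpanSingletonSup

section SubspacePoly

variable {F : Type*} [Field F] [Fintype F]

theorem eval_subspacePoly_eq_zero_iff {V : Set F} {x : F} :
    (subspacePoly V).eval x = 0 ↔ x ∈ V := by
  simp [subspacePoly, eval_prod, prod_eq_zero_iff, sub_eq_zero]

theorem subspacePoly_eq_prod (V : Set F) [Fintype V] :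
    subspacePoly V = ∏ v : V, (X - C (v : F)) :=
  prod_subtype _ (fun _ ↦ Set.Finite.mem_toFinset _) _

theorem subspacePoly_zero : subspacePoly ({0} : Set F) = X := by
  rw [subspacePoly, Set.Finite.toFinset_singleton, prod_singleton, C_0, sub_zero]

theorem subspacePoly_spanSingleton_sup {K : Type*} [Field K] [Fintype K] [Algebra K F]
    {W : Submodule K F} {u : F} (hu : u ∉ W) :
    subspacePoly ↑(K ∙ u ⊔ W) = ∏ a : K, (subspacePoly W).comp (X - C (a • u)) := by
  classical
  rw [subspacePoly_eq_prod]
  refine (Fintype.prod_equiv (Submodule.prodEquivSpanSingletonSup hu)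
    (fun z ↦ X - C (z.1 • u + z.2)) _ fun _ ↦ rfl).symm.trans ?_
  rw [Fintype.prod_prod_type]
  refine prod_congr rfl fun a _ ↦ ?_
  rw [subspacePoly_eq_prod, Polynomial.prod_comp]
  refine prod_congr rfl fun w _ ↦ ?_
  rw [sub_comp, X_comp, C_comp, sub_sub, ← C_add]

end SubspacePoly

section LinearizedSubspacePoly

variable {K F : Type*} [Field K] [Fintype K] [Field F] [Fintype F] [Algebra K F]

local notation "q" => Fintype.card K

theorem IsLinearized.spanSingleton_sup {W : Submodule K F} {m : ℕ}
    (hW : IsLinearized q m (subspacePoly (W : Set F))) {u : F} (hu : u ∉ W) :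
    IsLinearized q (m + 1) (subspacePoly ((K ∙ u ⊔ W : Submodule K F) : Set F)) := by
  set P := subspacePoly (W : Set F)
  have hb : P.eval u ≠ 0 := eval_subspacePoly_eq_zero_iff.not.mpr hu
  have hcomp (a : K) : P.comp (X - C (a • u)) = P - a • C (P.eval u) := by
    rw [hW.comp_X_sub_C, hW.eval_smul, smul_C]
  rw [subspacePoly_spanSingleton_sup hu, prod_congr rfl fun a _ ↦ hcomp a,
    prod_sub_smul_eq K P (isUnit_C.mpr hb.isUnit), ← C_pow]
  exact hW.pow_card.sub ((hW.C_mul _).mono m.le_succ)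

theorem exists_isLinearized_subspacePoly_span (s : Finset F) :
    ∃ m, Nat.card (Submodule.span K (s : Set F)) = q ^ m ∧
      IsLinearized q m (subspacePoly (Submodule.span K (s : Set F) : Set F)) := by
  classical
  induction s using Finset.induction_on with
  | empty => exact ⟨0, by simp, by simpa [subspacePoly_zero] using isLinearized_X⟩
  | insert u s _ ih =>
    obtain ⟨m, hcard, hlin⟩ := ih
    rw [coe_insert, Submodule.span_insert]
    by_cases hu : u ∈ Submodule.span K (s : Set F)
    · rw [sup_eq_right.mpr ((Submodule.span_singleton_le_iff_mem _ _).mpr hu)]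
      exact ⟨m, hcard, hlin⟩
    · exact ⟨m + 1, by rw [Submodule.natCard_spanSingleton_sup hu, hcard, pow_succ'],
        hlin.spanSingleton_sup hu⟩

theorem Submodule.isLinearized_subspacePoly (W : Submodule K F) :
    IsLinearized q (Module.finrank K W) (subspacePoly (W : Set F)) := by
  obtain ⟨m, hcard, hlin⟩ :=
    exists_isLinearized_subspacePoly_span (K := K) (W : Set F).toFinite.toFinset
  rw [Set.Finite.coe_toFinset, Submodule.span_eq] at hcard hlin
  obtain rfl : m = Module.finrank K W := Nat.pow_right_injective Fintype.one_lt_card <|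
    hcard.symm.trans <| by rw [Module.natCard_eq_pow_finrank (K := K), Nat.card_eq_fintype_card]
  exact hlin

end LinearizedSubspacePoly

theorem FiniteField.exists_intermediateField_finrank_eq {K L : Type*} [Field K] [Finite K]
    [Field L] [Finite L] [Algebra K L] {d : ℕ} (hd : d ∣ Module.finrank K L) (hd0 : d ≠ 0) :
    ∃ E : IntermediateField K L, Module.finrank K E = d := by
  have : Fact (ringChar K).Prime := ⟨CharP.char_is_prime K _⟩
  have : NeZero d := ⟨hd0⟩
  obtain ⟨φ⟩ := nonempty_algHom_of_finrank_dvd (K := Extension K (ringChar K) d) (L := L)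
    (by rwa [finrank_extension])
  exact ⟨φ.fieldRange,
    (AlgEquiv.ofInjectiveField φ).toLinearEquiv.finrank_eq.symm.trans (finrank_extension ..)⟩

section IntermediateField

variable {Fq F : Type*} [Field Fq] [Fintype Fq] [Field F] [Fintype F] [Algebra Fq F]
  (K : IntermediateField Fq F)

open Module

theorem IntermediateField.pow_card_pow_finrank {a : F} (ha : a ∈ K) :
    a ^ Fintype.card Fq ^ finrank Fq K = a := by
  let _ : Fintype K := Fintype.ofFinite K
  rw [← Module.card_eq_pow_finrank]
  exact congrArg Subtype.val (FiniteField.pow_card (⟨a, ha⟩ : K))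

theorem IntermediateField.isLinearized_subspacePoly {V : Submodule Fq F}
    (hV : ∀ a ∈ K, ∀ x ∈ V, a * x ∈ V) :
    IsLinearized (Fintype.card Fq ^ finrank Fq K) (finrank Fq V / finrank Fq K)
      (subspacePoly (V : Set F)) := by
  let _ : Fintype K := Fintype.ofFinite K
  let V' : Submodule K F := { V.toAddSubmonoid with smul_mem' a x hx := hV a a.2 x hx }
  have hcardK : Fintype.card K = Fintype.card Fq ^ finrank Fq K := Module.card_eq_pow_finrank
  have hrank : finrank Fq V = finrank Fq K * finrank K V' := by
    refine Nat.pow_right_injective (Fintype.one_lt_card (α := Fq)) ?_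
    change Fintype.card Fq ^ _ = Fintype.card Fq ^ _
    rw [pow_mul, ← hcardK, ← Nat.card_eq_fintype_card, ← Nat.card_eq_fintype_card,
      ← Module.natCard_eq_pow_finrank, ← Module.natCard_eq_pow_finrank]
    rfl
  rw [hrank, Nat.mul_div_cancel_left _ Module.finrank_pos, ← hcardK]
  exact V'.isLinearized_subspacePoly

end IntermediateField

theorem stmt15 (q n k d : ℕ) (hd : d ∣ Nat.gcd n k) (hd0 : 0 < d)
    (Fq F : Type*) [Field Fq] [Fintype Fq] [Field F] [Fintype F] [Algebra Fq F]
    (hq : Fintype.card Fq = q) (hn : Module.finrank Fq F = n)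
    (V : Submodule Fq F) (hkV : Module.finrank Fq V = k) :
    (∀ c x : F, c ^ q ^ d = c → x ∈ V → c * x ∈ V) ↔
      ∃ c : ℕ → F, subspacePoly (V : Set F) =
        ∑ i ∈ Finset.range (k / d + 1), C (c i) * X ^ q ^ (d * i) := by
  simp only [pow_mul]
  change _ ↔ IsLinearized (q ^ d) (k / d) (subspacePoly (V : Set F))
  constructor
  · intro hV
    obtain ⟨K, hK⟩ := FiniteField.exists_intermediateField_finrank_eq
      (hn ▸ hd.trans (Nat.gcd_dvd_left n k)) hd0.ne'
    have hKV : ∀ a ∈ K, ∀ x ∈ V, a * x ∈ V :=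
      fun a ha x ↦ hV a x (hq ▸ hK ▸ K.pow_card_pow_finrank ha)
    simpa only [hq, hK, hkV] using K.isLinearized_subspacePoly hKV
  · rintro hlin c x hc hx
    show c * x ∈ (V : Set F)
    rw [← eval_subspacePoly_eq_zero_iff, hlin.eval_mul hc, eval_subspacePoly_eq_zero_iff.mpr hx,
      mul_zero]
end
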